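/- PAPAL is strictly more expressive than epistemic logic (and than PAL) for at least two agents: for distinct agents a, b and atom p, there is no epistemic formula φ ∈ L_EL such that for every pointed epistemic model M_s, M_s ⊨ φ if and only if M_s ⊨ ◊⁺(K_a p ∧ ¬K_b K_a p). -/

import Mathlib

/-- An epistemic (S5) model: a nonempty set of states, an equivalence
relation for each agent, and a valuation of atoms. -/
structure EpiModel (A P : Type) where
  S : Type
  ne : Nonempty S
  rel : A → S → S → Prop
  equiv : ∀ a, Equivalence (rel a)
  val : P → Set S

/-- Positive formulas L_EL⁺ : p | ¬p | ∧ | ∨ | K_a. -/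
inductive PosForm (A P : Type) where
  | atom : P → PosForm A P
  | natom : P → PosForm A P
  | and : PosForm A P → PosForm A P → PosForm A P
  | or : PosForm A P → PosForm A P → PosForm A P
  | know : A → PosForm A P → PosForm A P

/-- Satisfaction of a positive formula, relativized to a current domain `D`
(representing the submodel of `M` induced by `D`). -/
def PosForm.sat {A P : Type} (M : EpiModel A P) : PosForm A P → Set M.S → M.S → Prop
  | .atom p, _, s => s ∈ M.val p
  | .natom p, _, s => s ∉ M.val p
  | .and φ ψ, D, s => PosForm.sat M φ D s ∧ PosForm.sat M ψ D s
  | .or φ ψ, D, s => PosForm.sat M φ D s ∨ PosForm.sat M ψ D s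
  | .know a φ, D, s => ∀ t, M.rel a s t → t ∈ D → PosForm.sat M φ D t

/-- The language L_PAPAL : atoms, ¬, ∧, K_a, announcements [ψ]φ and the
positive arbitrary-announcement quantifier □⁺. -/
inductive Form (A P : Type) where
  | atom : P → Form A P
  | neg : Form A P → Form A P
  | and : Form A P → Form A P → Form A P
  | know : A → Form A P → Form A P
  | ann : Form A P → Form A P → Form A P
  | pbox : Form A P → Form A P

/-- Satisfaction, relativized to a current domain `D`: `Form.sat M φ D s`
means that φ holds at state `s` of the restriction of `M` to `D`.
Announcement `[ψ]φ` further restricts the domain to the states of `D`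
satisfying ψ; `□⁺φ` quantifies over announcements of positive formulas. -/
def Form.sat {A P : Type} (M : EpiModel A P) : Form A P → Set M.S → M.S → Prop
  | .atom p, _, s => s ∈ M.val p
  | .neg φ, D, s => ¬ Form.sat M φ D s
  | .and φ ψ, D, s => Form.sat M φ D s ∧ Form.sat M ψ D s
  | .know a φ, D, s => ∀ t, M.rel a s t → t ∈ D → Form.sat M φ D t
  | .ann ψ φ, D, s => Form.sat M ψ D s → Form.sat M φ {t | t ∈ D ∧ Form.sat M ψ D t} s
  | .pbox φ, D, s => ∀ χ : PosForm A P, PosForm.sat M χ D s →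
      Form.sat M φ {t | t ∈ D ∧ PosForm.sat M χ D t} s

/-- Truth at a pointed model `M_s`. -/
def Sat {A P : Type} (M : EpiModel A P) (s : M.S) (φ : Form A P) : Prop :=
  Form.sat M φ Set.univ s

def Form.or {A P : Type} (φ ψ : Form A P) : Form A P := .neg (.and (.neg φ) (.neg ψ))
def Form.imp {A P : Type} (φ ψ : Form A P) : Form A P := Form.or (.neg φ) ψ
def Form.iff {A P : Type} (φ ψ : Form A P) : Form A P := .and (Form.imp φ ψ) (Form.imp ψ φ)
def Form.pdia {A P : Type} (φ : Form A P) : Form A P := .neg (.pbox (.neg φ))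
def Form.lknow {A P : Type} (a : A) (φ : Form A P) : Form A P := .neg (.know a (.neg φ))

/-- Validity on the class S5 of all epistemic models. -/
def Valid (A P : Type) (φ : Form A P) : Prop :=
  ∀ (M : EpiModel A P) (s : M.S), Sat M s φ

/-- The language L_EL of epistemic logic. -/
inductive ELForm (A P : Type) where
  | atom : P → ELForm A P
  | neg : ELForm A P → ELForm A P
  | and : ELForm A P → ELForm A P → ELForm A P
  | know : A → ELForm A P → ELForm A P

/-- Satisfaction of epistemic formulas. -/
def ELForm.sat {A P : Type} (M : EpiModel A P) : ELForm A P → M.S → Prop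
  | .atom p, s => s ∈ M.val p
  | .neg φ, s => ¬ ELForm.sat M φ s
  | .and φ ψ, s => ELForm.sat M φ s ∧ ELForm.sat M ψ s
  | .know a φ, s => ∀ t, M.rel a s t → ELForm.sat M φ t


/-!
Take four states with `p` true at `0` and `1`, where `a` confuses `0` with `2` and `1` with `3`,
and `b` confuses `0` with `1`. Given `φ`, pick an atom `q` not occurring in `φ`. If `q` is false
only at `2`, announcing `q` at `0` makes `K_a p` true there, while `b` still considers `1`
possible, where `3` keeps `K_a p` false. If instead `q` is true everywhere, `φ` has the same
value at `0`, but positive formulas are preserved along refinements and `3` refines to `2`: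
every positive announcement that removes `2` (as `K_a p` at `0` requires) also removes `3`,
and then `K_b K_a p` holds at `0`.
-/

namespace EpiModel

variable {A P : Type}

abbrev withVal (M : EpiModel A P) (V : P → Set M.S) : EpiModel A P := { M with val := V }

def IsRefinement (M : EpiModel A P) (D : Set M.S) (Z : M.S → M.S → Prop) : Prop :=
  ∀ s s', Z s s' → (∀ r, s ∈ M.val r ↔ s' ∈ M.val r) ∧
    ∀ c t', M.rel c s' t' → t' ∈ D → ∃ t, M.rel c s t ∧ t ∈ D ∧ Z t t'

end EpiModel

namespace ELForm

variable {A P : Type}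

def atoms : ELForm A P → List P
  | .atom r => [r]
  | .neg φ => φ.atoms
  | .and φ ψ => φ.atoms ++ ψ.atoms
  | .know _ φ => φ.atoms

theorem sat_withVal_iff {M : EpiModel A P} {V : P → Set M.S} {φ : ELForm A P}
    (hV : ∀ r ∈ φ.atoms, V r = M.val r) (s : M.S) :
    ELForm.sat (M.withVal V) φ s ↔ ELForm.sat M φ s := by
  induction φ generalizing s with
  | atom r =>
    show s ∈ V r ↔ s ∈ M.val r
    rw [hV r (List.mem_singleton_self r)]
  | neg φ ih => exact not_congr (ih hV s)
  | and φ ψ ihφ ihψ =>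
    simp only [atoms, List.mem_append] at hV
    exact and_congr (ihφ (fun r h => hV r (.inl h)) s) (ihψ (fun r h => hV r (.inr h)) s)
  | know c φ ih => exact forall_congr' fun t => imp_congr_right fun _ => ih hV t

end ELForm

theorem PosForm.sat_of_isRefinement {A P : Type} {M : EpiModel A P} {D : Set M.S}
    {Z : M.S → M.S → Prop} (hZ : M.IsRefinement D Z) (χ : PosForm A P) {s s' : M.S}
    (hss' : Z s s') (hs : PosForm.sat M χ D s) : PosForm.sat M χ D s' := by
  induction χ generalizing s s' with
  | atom r => exact ((hZ s s' hss').1 r).1 hs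
  | natom r => exact mt ((hZ s s' hss').1 r).2 hs
  | and φ ψ ihφ ihψ => exact ⟨ihφ hss' hs.1, ihψ hss' hs.2⟩
  | or φ ψ ihφ ihψ => exact hs.imp (ihφ hss') (ihψ hss')
  | know c φ ih =>
    intro t' hst' ht'
    obtain ⟨t, hst, ht, htt'⟩ := (hZ s s' hss').2 c t' hst' ht'
    exact ih htt' (hs t hst ht)

theorem Form.sat_pdia_iff {A P : Type} {M : EpiModel A P} {φ : Form A P} {D : Set M.S}
    {s : M.S} : Form.sat M φ.pdia D s ↔
      ∃ χ : PosForm A P, PosForm.sat M χ D s ∧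
        Form.sat M φ {t | t ∈ D ∧ PosForm.sat M χ D t} s := by
  simp [Form.pdia, Form.sat]

def Form.knowsUnbeknownTo {A P : Type} (a b : A) (p : P) : Form A P :=
  .and (.know a (.atom p)) (.neg (.know b (.know a (.atom p))))

section Square

variable {A P : Type} (a b : A) (p : P)

open Classical in
/-- The class of a state for agent `c`: `a` cannot tell `0` from `2` nor `1` from `3`, `b`
cannot tell `0` from `1`, and every other agent tells all states apart. -/
noncomputable def squareClass (c : A) (x : Fin 4) : ℕ :=
  if c = a then x.val % 2 else if c = b ∧ x.val < 2 then 0 else x.val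

noncomputable abbrev squareModel : EpiModel A P where
  S := Fin 4
  ne := ⟨0⟩
  rel c x y := squareClass a b c x = squareClass a b c y
  equiv _ := ⟨fun _ => rfl, Eq.symm, Eq.trans⟩
  val r := {x | r = p → x.val < 2}

abbrev squareDescent (x y : Fin 4) : Prop := x = y ∨ (x = 3 ∧ y = 2) ∨ (x = 1 ∧ y = 0)

variable {a b p}

theorem squareClass_left (x : Fin 4) : squareClass a b a x = x.val % 2 := by
  simp [squareClass]

theorem squareClass_right (hab : a ≠ b) (x : Fin 4) :
    squareClass a b b x = if x.val < 2 then 0 else x.val := by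
  simp [squareClass, hab.symm]

theorem squareClass_of_ne {c : A} (ha : c ≠ a) (hb : c ≠ b) (x : Fin 4) :
    squareClass a b c x = x.val := by
  simp [squareClass, ha, hb]

theorem squareDescent_back (hab : a ≠ b) (c : A) {s s' t' : Fin 4} (hss' : squareDescent s s')
    (hst' : squareClass a b c s' = squareClass a b c t') :
    ∃ t, squareClass a b c s = squareClass a b c t ∧ squareDescent t t' := by
  by_cases ha : c = a
  · subst ha; simp only [squareClass_left] at hst' ⊢; decide +revert
  by_cases hb : c = b
  · subst hb; simp only [squareClass_right hab] at hst' ⊢; decide +revert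
  simp only [squareClass_of_ne ha hb] at hst' ⊢; decide +revert

theorem squareDescent_lt_two_iff {s s' : Fin 4} (hss' : squareDescent s s') :
    s.val < 2 ↔ s'.val < 2 := by
  decide +revert

theorem squareModel_isRefinement (hab : a ≠ b) :
    (squareModel a b p).IsRefinement Set.univ squareDescent := by
  intro s s' hss'
  refine ⟨fun r => imp_congr_right fun _ => squareDescent_lt_two_iff hss', fun c t' hst' _ => ?_⟩
  obtain ⟨t, hst, htt'⟩ := squareDescent_back hab c hss' hst'
  exact ⟨t, hst, trivial, htt'⟩

open Classical in
theorem sat_pdia_knowsUnbeknownTo_update (hab : a ≠ b) {q : P} (hqp : q ≠ p) :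
    Sat ((squareModel a b p).withVal (Function.update (squareModel a b p).val q {2}ᶜ)) 0
      (Form.knowsUnbeknownTo a b p).pdia := by
  unfold Sat
  refine Form.sat_pdia_iff.2 ⟨.atom q, by simp [PosForm.sat], ?_⟩
  have hp : ∀ x : Fin 4, x ∈ Function.update (squareModel a b p).val q {2}ᶜ p ↔ x.val < 2 := by
    simp [Function.update_of_ne hqp.symm]
  have hq : ∀ x : Fin 4, x ∈ Function.update (squareModel a b p).val q {2}ᶜ q ↔ x ≠ 2 := by
    simp
  simp only [Form.knowsUnbeknownTo, Form.sat, PosForm.sat, Set.mem_ofPred_eq, Set.mem_univ,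
    true_and, hp, hq, squareClass_left, squareClass_right hab, Fin.isValue, Fin.val_zero]
  decide

theorem not_sat_pdia_knowsUnbeknownTo (hab : a ≠ b) :
    ¬ Sat (squareModel a b p) 0 (Form.knowsUnbeknownTo a b p).pdia := by
  unfold Sat
  rw [Form.sat_pdia_iff]
  rintro ⟨χ, -, hKa, hnKb⟩
  set D := {t | t ∈ Set.univ ∧ PosForm.sat (squareModel a b p) χ Set.univ t}
  have h2 : (2 : Fin 4) ∉ D := fun h2 =>
    absurd (hKa 2 (by simp [squareClass_left]) h2 rfl) (lt_irrefl 2)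
  have h3 : (3 : Fin 4) ∉ D := fun h3 =>
    h2 ⟨trivial, χ.sat_of_isRefinement (squareModel_isRefinement hab) (by decide) h3.2⟩
  refine hnKb fun t _ _ u _ hu _ => ?_
  have key : ∀ u : Fin 4, u ≠ 2 → u ≠ 3 → u.val < 2 := by decide
  exact key u (ne_of_mem_of_not_mem hu h2) (ne_of_mem_of_not_mem hu h3)

end Square

theorem papal_more_expressive_than_el_general
    (A P : Type) [Infinite P]
    (a b : A) (hab : a ≠ b) (p : P) :
    ¬ ∃ φ : ELForm A P, ∀ (M : EpiModel A P) (s : M.S),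
        ELForm.sat M φ s ↔
          Sat M s (Form.pdia (.and (.know a (.atom p))
            (.neg (.know b (.know a (.atom p)))))) := by
  classical
  rintro ⟨φ, hφ⟩
  obtain ⟨q, hq⟩ := (p :: φ.atoms).finite_toSet.exists_notMem
  obtain ⟨hqp, hqφ⟩ : q ≠ p ∧ q ∉ φ.atoms := by simpa using hq
  set M := squareModel a b p
  have hφ_update : ELForm.sat (M.withVal (Function.update M.val q {2}ᶜ)) φ 0 :=
    (hφ _ _).2 (sat_pdia_knowsUnbeknownTo_update hab hqp)
  rw [ELForm.sat_withVal_iff fun r hr => Function.update_of_ne (ne_of_mem_of_not_mem hr hqφ) _ _]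
    at hφ_update
  exact not_sat_pdia_knowsUnbeknownTo hab ((hφ M 0).1 hφ_update)

/-- PAPAL is strictly more expressive than epistemic logic
(hence than PAL) for at least two agents: no epistemic formula is equivalent,
on all pointed epistemic models, to `◊⁺(K_a p ∧ ¬K_b K_a p)`. -/
theorem papal_more_expressive_than_el
    (A P : Type) [Countable A] [Countable P] [Infinite P]
    (a b : A) (hab : a ≠ b) (p : P) :
    ¬ ∃ φ : ELForm A P, ∀ (M : EpiModel A P) (s : M.S),
        ELForm.sat M φ s ↔
          Sat M s (Form.pdia (.and (.know a (.atom p))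
            (.neg (.know b (.know a (.atom p)))))) :=
  papal_more_expressive_than_el_general A P a b hab p
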